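/- For every nonnegative integer n and indeterminates z, x, q: (z;q)_{n+1}/(q;q)_n * sum_{i=0}^n [n choose i]_q * (-1)^{i-1} (x+1)(x+q)...(x+q^{i-1}) * q^i / (1-z q^i) = sum_{i=0}^n (-1)^{i-1} (z;q)_i/(q;q)_i * x^i q^i. -/

import Mathlib

open Finset

variable {F : Type*} [Field F]

/-- `(q;q)_n = (1-q)(1-q^2)...(1-q^n)` -/
def qfac (q : F) (n : ℕ) : F := ∏ j ∈ Finset.range n, (1 - q ^ (j + 1))

/-- `(z;q)_k = (1-z)(1-zq)...(1-zq^{k-1})` -/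
def qpoch (z q : F) (k : ℕ) : F := ∏ j ∈ Finset.range k, (1 - z * q ^ j)

/-- Gaussian binomial coefficient `[n choose k]_q` -/
def qbinom (q : F) (n k : ℕ) : F := qfac q n / (qfac q k * qfac q (n - k))

/-- Sum over weakly increasing `m`-tuples `lo ≤ i_1 ≤ ... ≤ i_m ≤ n` of
`∏_j q^{i_j}/(1-q^{i_j})` (equal to `1` when `m = 0`). -/
def chainSum (q : F) (lo n m : ℕ) : F :=
  ∑ c ∈ Finset.univ.filter (fun c : Fin m → Fin (n + 1) =>
      (∀ j k : Fin m, j ≤ k → c j ≤ c k) ∧ ∀ j, lo ≤ (c j : ℕ)),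
    ∏ j, q ^ (c j : ℕ) / (1 - q ^ (c j : ℕ))

/-- Complete homogeneous symmetric function `h_m` of the variables
`x lo, x (lo+1), ..., x n`. -/
def hSum {R : Type*} [CommRing R] (x : ℕ → R) (lo n m : ℕ) : R :=
  ∑ c ∈ Finset.univ.filter (fun c : Fin m → Fin (n + 1) =>
      (∀ j k : Fin m, j ≤ k → c j ≤ c k) ∧ ∀ j, lo ≤ (c j : ℕ)),
    ∏ j, x (c j : ℕ)

lemma qfac_zero (q : F) : qfac q 0 = 1 := by simp [qfac]

lemma qfac_succ (q : F) (m : ℕ) : qfac q (m+1) = qfac q m * (1 - q^(m+1)) := by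
  simp [qfac, Finset.prod_range_succ]

lemma qpoch_succ (z q : F) (m : ℕ) : qpoch z q (m+1) = qpoch z q m * (1 - z * q^m) := by
  simp [qpoch, Finset.prod_range_succ]

lemma qfac_ne_zero {q : F} {m : ℕ} (hq : ∀ i ∈ Finset.Icc 1 m, q^i ≠ 1) : qfac q m ≠ 0 := by
  unfold qfac
  rw [Finset.prod_ne_zero_iff]
  intro j hj h
  exact hq (j+1) (by simp at hj ⊢; omega) (by linear_combination -h)

lemma qbinom_zero {q : F} (m : ℕ) (h : qfac q m ≠ 0) : qbinom q m 0 = 1 := by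
  simp [qbinom, qfac_zero, div_self h]

lemma qbinom_self {q : F} (m : ℕ) (h : qfac q m ≠ 0) : qbinom q m m = 1 := by
  simp [qbinom, Nat.sub_self, qfac_zero, div_self h]

lemma qbinom_pascal {q : F} {m j : ℕ} (hq : ∀ i ∈ Finset.Icc 1 m, q^i ≠ 1) (hj : j + 1 ≤ m) :
    qbinom q (m+1) (j+1) = q^(j+1) * qbinom q m (j+1) + qbinom q m j := by
  have hA : qfac q j ≠ 0 := qfac_ne_zero (fun i hi => hq i (by simp only [Finset.mem_Icc] at hi ⊢; omega))
  have hC : qfac q (m - (j+1)) ≠ 0 := qfac_ne_zero (fun i hi => hq i (by simp only [Finset.mem_Icc] at hi ⊢; omega))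
  have ha : (1:F) - q^(j+1) ≠ 0 := by
    intro h; exact hq (j+1) (by simp only [Finset.mem_Icc]; omega) (by linear_combination -h)
  have hb : (1:F) - q^(m - (j+1) + 1) ≠ 0 := by
    intro h; exact hq (m - (j+1) + 1) (by simp only [Finset.mem_Icc]; omega) (by linear_combination -h)
  have e1 : m + 1 - (j+1) = m - (j+1) + 1 := by omega
  have e2 : m - j = m - (j+1) + 1 := by omega
  have hpow : q^(j+1) * q^(m - (j+1) + 1) = q^(m+1) := by
    rw [← pow_add]; congr 1; omega
  unfold qbinom
  rw [e1, e2, qfac_succ q m, qfac_succ q (m - (j+1)), qfac_succ q j, ← hpow]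
  field_simp
  ring_nf

lemma qbinom_absorb {q : F} {m i : ℕ} (hq : ∀ k ∈ Finset.Icc 1 (m+1), q^k ≠ 1) (hi : i ≤ m) :
    (1 - q^(m+1-i)) * qbinom q (m+1) i = (1 - q^(m+1)) * qbinom q m i := by
  have hA : qfac q i ≠ 0 := qfac_ne_zero (fun k hk => hq k (by simp only [Finset.mem_Icc] at hk ⊢; omega))
  have hC : qfac q (m - i) ≠ 0 := qfac_ne_zero (fun k hk => hq k (by simp only [Finset.mem_Icc] at hk ⊢; omega))
  have hb : (1:F) - q^(m - i + 1) ≠ 0 := by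
    intro h; exact hq (m - i + 1) (by simp only [Finset.mem_Icc]; omega) (by linear_combination -h)
  have e1 : m + 1 - i = m - i + 1 := by omega
  unfold qbinom
  rw [e1, qfac_succ q m, qfac_succ q (m - i)]
  field_simp

lemma bsum (q x : F) (m : ℕ) (hq : ∀ i ∈ Finset.Icc 1 m, q ^ i ≠ 1) :
    ∑ i ∈ range (m + 1), qbinom q m i * ((-1) ^ i * ∏ j ∈ range i, (x + q ^ j)) = (-x) ^ m := by
  induction m with
  | zero => simp [qbinom, qfac_zero]
  | succ m ih =>
    have hq' : ∀ i ∈ Finset.Icc 1 m, q^i ≠ 1 := fun i hi => hq i (by simp only [Finset.mem_Icc] at hi ⊢; omega)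
    have hfacm1 : qfac q (m+1) ≠ 0 := qfac_ne_zero hq
    have hfacm : qfac q m ≠ 0 := qfac_ne_zero hq'
    calc ∑ i ∈ range (m+2), qbinom q (m+1) i * ((-1) ^ i * ∏ j ∈ range i, (x + q ^ j))
        = (∑ i ∈ range (m+1), qbinom q (m+1) i * ((-1) ^ i * ∏ j ∈ range i, (x + q ^ j)))
            + qbinom q (m+1) (m+1) * ((-1) ^ (m+1) * ∏ j ∈ range (m+1), (x + q ^ j)) :=
          Finset.sum_range_succ _ _
      _ = (∑ i ∈ range m, qbinom q (m+1) (i+1) * ((-1) ^ (i+1) * ∏ j ∈ range (i+1), (x + q ^ j)))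
            + qbinom q (m+1) 0 * ((-1) ^ 0 * ∏ j ∈ range 0, (x + q ^ j))
            + qbinom q (m+1) (m+1) * ((-1) ^ (m+1) * ∏ j ∈ range (m+1), (x + q ^ j)) := by
          rw [Finset.sum_range_succ']
      _ = (∑ i ∈ range m, (q^(i+1) * qbinom q m (i+1) * ((-1) ^ (i+1) * ∏ j ∈ range (i+1), (x + q ^ j))
              + qbinom q m i * ((-1) ^ (i+1) * ∏ j ∈ range (i+1), (x + q ^ j))))
            + 1 + (-1) ^ (m+1) * ∏ j ∈ range (m+1), (x + q ^ j) := by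
          have mid : ∀ i ∈ range m, qbinom q (m+1) (i+1) * ((-1) ^ (i+1) * ∏ j ∈ range (i+1), (x + q ^ j))
              = q^(i+1) * qbinom q m (i+1) * ((-1) ^ (i+1) * ∏ j ∈ range (i+1), (x + q ^ j))
                + qbinom q m i * ((-1) ^ (i+1) * ∏ j ∈ range (i+1), (x + q ^ j)) := by
            intro i hi
            rw [qbinom_pascal hq' (by simp at hi; omega)]
            ring
          rw [Finset.sum_congr rfl mid, qbinom_zero _ hfacm1, qbinom_self _ hfacm1]
          simp
      _ = ((∑ i ∈ range m, q^(i+1) * qbinom q m (i+1) * ((-1) ^ (i+1) * ∏ j ∈ range (i+1), (x + q ^ j))) + 1)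
            + ((∑ i ∈ range m, qbinom q m i * ((-1) ^ (i+1) * ∏ j ∈ range (i+1), (x + q ^ j)))
              + (-1) ^ (m+1) * ∏ j ∈ range (m+1), (x + q ^ j)) := by
          rw [Finset.sum_add_distrib]; ring
      _ = (∑ i ∈ range (m+1), q^i * qbinom q m i * ((-1) ^ i * ∏ j ∈ range i, (x + q ^ j)))
            + (∑ i ∈ range (m+1), qbinom q m i * ((-1) ^ (i+1) * ∏ j ∈ range (i+1), (x + q ^ j))) := by
          rw [Finset.sum_range_succ' (fun i => q^i * qbinom q m i * ((-1) ^ i * ∏ j ∈ range i, (x + q ^ j))) m,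
            Finset.sum_range_succ (fun i => qbinom q m i * ((-1) ^ (i+1) * ∏ j ∈ range (i+1), (x + q ^ j))) m,
            qbinom_zero _ hfacm, qbinom_self _ hfacm]
          simp
      _ = ∑ i ∈ range (m+1), qbinom q m i * (-x * ((-1) ^ i * ∏ j ∈ range i, (x + q ^ j))) := by
          rw [← Finset.sum_add_distrib]
          refine Finset.sum_congr rfl (fun i _ => ?_)
          rw [Finset.prod_range_succ]
          ring
      _ = -x * ∑ i ∈ range (m+1), qbinom q m i * ((-1) ^ i * ∏ j ∈ range i, (x + q ^ j)) := by
          rw [Finset.mul_sum]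
          exact Finset.sum_congr rfl (fun i _ => by ring)
      _ = (-x) ^ (m+1) := by rw [ih hq']; ring

lemma keyK (q x z : F) (n : ℕ) (hq : ∀ i ∈ Finset.Icc 1 (n+1), q^i ≠ 1)
    (hz : ∀ i ∈ Finset.range (n+2), z * q^i ≠ 1) :
    (1 - z * q^(n+1)) * (∑ i ∈ range (n+2),
        qbinom q (n+1) i * ((-1) ^ (i+1) * ∏ j ∈ range i, (x + q ^ j)) * q ^ i / (1 - z * q ^ i))
    = (1 - q^(n+1)) * (∑ i ∈ range (n+1),
        qbinom q n i * ((-1) ^ (i+1) * ∏ j ∈ range i, (x + q ^ j)) * q ^ i / (1 - z * q ^ i))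
      + (-1)^n * x^(n+1) * q^(n+1) := by
  rw [Finset.mul_sum]
  have termEq : ∀ i ∈ range (n+2),
      (1 - z * q^(n+1)) * (qbinom q (n+1) i * ((-1) ^ (i+1) * ∏ j ∈ range i, (x + q ^ j)) * q ^ i / (1 - z * q ^ i))
      = q^(n+1) * (qbinom q (n+1) i * ((-1) ^ (i+1) * ∏ j ∈ range i, (x + q ^ j)))
        + (1 - q^(n+1-i)) * qbinom q (n+1) i * ((-1) ^ (i+1) * ∏ j ∈ range i, (x + q ^ j)) * q ^ i / (1 - z * q ^ i) := by
    intro i hi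
    have hii : i ≤ n + 1 := by simp at hi; omega
    have hzi : (1:F) - z * q^i ≠ 0 := by
      intro h
      exact hz i (by simp; omega) (by linear_combination -h)
    have hpow : q^(n+1-i) * q^i = q^(n+1) := by rw [← pow_add]; congr 1; omega
    field_simp
    linear_combination (qbinom q (n+1) i * ∏ j ∈ range i, (x + q ^ j)) * hpow
  rw [Finset.sum_congr rfl termEq, Finset.sum_add_distrib]
  have first : ∑ i ∈ range (n+2), q^(n+1) * (qbinom q (n+1) i * ((-1) ^ (i+1) * ∏ j ∈ range i, (x + q ^ j)))
      = (-1)^n * x^(n+1) * q^(n+1) := by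
    have : ∀ i ∈ range (n+2), q^(n+1) * (qbinom q (n+1) i * ((-1) ^ (i+1) * ∏ j ∈ range i, (x + q ^ j)))
        = -q^(n+1) * (qbinom q (n+1) i * ((-1) ^ i * ∏ j ∈ range i, (x + q ^ j))) := by
      intro i _
      rw [pow_succ]
      ring
    rw [Finset.sum_congr rfl this, ← Finset.mul_sum, bsum q x (n+1) hq, neg_pow]
    rw [pow_succ (-1:F) n]
    ring
  have second : ∑ i ∈ range (n+2),
      (1 - q^(n+1-i)) * qbinom q (n+1) i * ((-1) ^ (i+1) * ∏ j ∈ range i, (x + q ^ j)) * q ^ i / (1 - z * q ^ i)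
      = (1 - q^(n+1)) * (∑ i ∈ range (n+1),
        qbinom q n i * ((-1) ^ (i+1) * ∏ j ∈ range i, (x + q ^ j)) * q ^ i / (1 - z * q ^ i)) := by
    rw [Finset.sum_range_succ]
    have htop : (1 - q^(n+1-(n+1))) * qbinom q (n+1) (n+1) * ((-1) ^ (n+1+1) * ∏ j ∈ range (n+1), (x + q ^ j)) * q ^ (n+1) / (1 - z * q ^ (n+1)) = 0 := by
      simp
    rw [htop, add_zero, Finset.mul_sum]
    refine Finset.sum_congr rfl (fun i hi => ?_)
    have hin : i ≤ n := by simp at hi; omega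
    have habs := qbinom_absorb hq hin
    linear_combination (((-1) ^ (i+1) * ∏ j ∈ range i, (x + q ^ j)) * q ^ i / (1 - z * q ^ i)) * habs
  rw [first, second]
  ring

theorem fu_lascoux_eq2 (q x z : F) (n : ℕ)
    (hq : ∀ i ∈ Finset.Icc 1 n, q ^ i ≠ 1)
    (hz : ∀ i ∈ Finset.range (n + 1), z * q ^ i ≠ 1) :
    qpoch z q (n + 1) / qfac q n *
        ∑ i ∈ Finset.range (n + 1),
          qbinom q n i * ((-1) ^ (i + 1) * ∏ j ∈ Finset.range i, (x + q ^ j)) * q ^ i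
            / (1 - z * q ^ i)
      = ∑ i ∈ Finset.range (n + 1), (-1) ^ (i + 1) * (qpoch z q i / qfac q i) * x ^ i * q ^ i := by
  induction n with
  | zero =>
    have h0 : (1:F) - z ≠ 0 := by
      intro h
      exact hz 0 (by simp) (by simpa using by linear_combination -h)
    show qpoch z q 1 / qfac q 0 * ∑ i ∈ Finset.range 1, _ = ∑ i ∈ Finset.range 1, _
    rw [Finset.sum_range_one, Finset.sum_range_one, qpoch_succ, qbinom]
    simp only [qpoch, qfac_zero, Finset.range_zero, Finset.prod_empty, pow_zero, mul_one,
      one_mul, Nat.sub_self]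
    field_simp
  | succ n ih =>
    have hq' : ∀ i ∈ Finset.Icc 1 n, q^i ≠ 1 := fun i hi => hq i (by simp only [Finset.mem_Icc] at hi ⊢; omega)
    have hz' : ∀ i ∈ Finset.range (n+1), z * q^i ≠ 1 := fun i hi => hz i (by simp at hi ⊢; omega)
    have IH := ih hq' hz'
    have hc : (1:F) - q^(n+1) ≠ 0 := by
      intro h
      exact hq (n+1) (by simp only [Finset.mem_Icc]; omega) (by linear_combination -h)
    have hb : qfac q n ≠ 0 := qfac_ne_zero hq'
    have hK := keyK q x z n hq hz
    rw [Finset.sum_range_succ (fun i => (-1:F) ^ (i + 1) * (qpoch z q i / qfac q i) * x ^ i * q ^ i) (n+1),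
      ← IH, qpoch_succ z q (n+1)]
    simp only [show n+2 = n+1+1 from rfl] at hK
    rw [qfac_succ q n]
    have expand : qpoch z q (n+1) * (1 - z * q^(n+1)) / (qfac q n * (1 - q^(n+1))) *
          ∑ i ∈ range (n+1+1), qbinom q (n+1) i * ((-1) ^ (i+1) * ∏ j ∈ range i, (x + q ^ j)) * q ^ i / (1 - z * q ^ i)
        = qpoch z q (n+1) / (qfac q n * (1 - q^(n+1))) *
          ((1 - z * q^(n+1)) * ∑ i ∈ range (n+1+1), qbinom q (n+1) i * ((-1) ^ (i+1) * ∏ j ∈ range i, (x + q ^ j)) * q ^ i / (1 - z * q ^ i)) := by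
      ring
    rw [expand, hK]
    field_simp
    ring
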